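/- arXiv:1303.1290 — 3 statements merged into one kernel-verified Lean document; each statement's English description precedes it below -/
import Mathlib

section
/- Let i ∈ {3,4,5}, let β be a finite type, and let H be a subgroup of Equiv.Perm β that is contained in a subgroup of Equiv.Perm β which is a direct sum of regular groups. Let M be a normal subgroup of C_i, N a normal subgroup of H, φ : C_i ⧸ M ≃* H ⧸ N a group isomorphism, and let G = C_i/M ⊕_φ H/N be the corresponding nontrivial subdirect sum (a subgroup of Equiv.Perm (Fin i ⊕ β), nontrivial meaning M ≠ C_i). If H is 2-representable, then G is 2-representable. -/
/-- The symmetry (invariance) group of a function `f` on boolean tuples indexed by `α`: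
all permutations `σ` with `f (x ∘ σ) = f x` for every `x : α → Bool`. -/
def symmGroup {α V : Type*} (f : (α → Bool) → V) : Subgroup (Equiv.Perm α) where
  carrier := {σ | ∀ x : α → Bool, f (x ∘ σ) = f x}
  one_mem' := by intro x; simp
  mul_mem' := by
    intro a b ha hb x
    have h : x ∘ ⇑(a * b) = (x ∘ ⇑a) ∘ ⇑b := by
      ext y; simp [Equiv.Perm.mul_apply, Function.comp]
    rw [h, hb, ha]
  inv_mem' := by
    intro a ha x
    have h := ha (x ∘ ⇑a⁻¹)
    have h2 : (x ∘ ⇑a⁻¹) ∘ ⇑a = x := by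
      ext y; simp [Function.comp]
    rw [h2] at h
    exact h.symm

/-- A subgroup of `Equiv.Perm α` is `k`-representable if it is the symmetry group of a
`k`-valued boolean function. -/
def Representable (k : ℕ) {α : Type*} (G : Subgroup (Equiv.Perm α)) : Prop :=
  ∃ f : (α → Bool) → Fin k, G = symmGroup f

/-- The direct sum of two permutation groups, acting on the disjoint union. -/
def directSum {α β : Type*} (G : Subgroup (Equiv.Perm α)) (H : Subgroup (Equiv.Perm β)) :
    Subgroup (Equiv.Perm (α ⊕ β)) :=
  (G.prod H).map (Equiv.Perm.sumCongrHom α β)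

/-- A permutation group is regular if it is transitive and only the identity has a fixed point. -/
def IsRegularPermGroup {α : Type*} (G : Subgroup (Equiv.Perm α)) : Prop :=
  (∀ a b : α, ∃ σ ∈ G, σ a = b) ∧ ∀ σ ∈ G, ∀ a : α, σ a = a → σ = 1

/-- `B` is a direct sum of regular groups: under some identification of `α` with a finite
sigma type, `B` consists exactly of the permutations preserving each block and acting on
block `i` as an element of a fixed regular group `G i`. -/
def IsDirectSumOfRegular {α : Type*} (B : Subgroup (Equiv.Perm α)) : Prop :=
  ∃ (ι : Type) (_ : Fintype ι) (β : ι → Type) (_ : ∀ i, Fintype (β i))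
    (e : α ≃ Σ i, β i) (G : ∀ i, Subgroup (Equiv.Perm (β i))),
    (∀ i, IsRegularPermGroup (G i)) ∧
    ∀ π : Equiv.Perm α, π ∈ B ↔
      ∃ g : ∀ i, Equiv.Perm (β i), (∀ i, g i ∈ G i) ∧
        ∀ a : α, e (π a) = ⟨(e a).1, g (e a).1 (e a).2⟩

/-- `C_n`, the cyclic group generated by the cycle `0 ↦ 1 ↦ ⋯ ↦ n-1 ↦ 0`. -/
def Cgroup (n : ℕ) : Subgroup (Equiv.Perm (Fin n)) := Subgroup.zpowers (finRotate n)

/-- The Klein four-group `K₄ ≤ S₄` generated by `(0 1)(2 3)` and `(0 2)(1 3)`. -/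
def K4 : Subgroup (Equiv.Perm (Fin 4)) :=
  Subgroup.closure {Equiv.swap 0 1 * Equiv.swap 2 3, Equiv.swap 0 2 * Equiv.swap 1 3}

/-- Permutation isomorphism of permutation groups. -/
def PermIso {α β : Type*} (G : Subgroup (Equiv.Perm α)) (H : Subgroup (Equiv.Perm β)) : Prop :=
  ∃ e : α ≃ β, ∀ σ : Equiv.Perm α, σ ∈ G ↔ e.permCongr σ ∈ H

/-- A set `S` is regular in `H` if the identity is the only element of `H` mapping `S` to itself. -/
def IsRegularSet {α : Type*} (S : Set α) (H : Subgroup (Equiv.Perm α)) : Prop :=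
  ∀ σ ∈ H, ⇑σ '' S = S → σ = 1

/-- The subdirect sum `G/M ⊕_φ H/N`: all `Equiv.sumCongr σ τ` with `σ ∈ G`, `τ ∈ H` and
`φ (σ M) = τ N`. -/
def subdirectSum {α β : Type*} (G : Subgroup (Equiv.Perm α)) (H : Subgroup (Equiv.Perm β))
    (M : Subgroup G) [M.Normal] (N : Subgroup H) [N.Normal]
    (φ : G ⧸ M ≃* H ⧸ N) : Subgroup (Equiv.Perm (α ⊕ β)) where
  carrier := {π | ∃ (σ : G) (τ : H),
    φ (QuotientGroup.mk σ) = QuotientGroup.mk τ ∧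
    π = Equiv.Perm.sumCongrHom α β ((σ : Equiv.Perm α), (τ : Equiv.Perm β))}
  one_mem' := ⟨1, 1, by simp, by simp⟩
  mul_mem' := by
    rintro _ _ ⟨σ₁, τ₁, h1, rfl⟩ ⟨σ₂, τ₂, h2, rfl⟩
    refine ⟨σ₁ * σ₂, τ₁ * τ₂, ?_, ?_⟩
    · rw [QuotientGroup.mk_mul, QuotientGroup.mk_mul, map_mul, h1, h2]
    · rw [← map_mul]
      rfl
  inv_mem' := by
    rintro _ ⟨σ, τ, h, rfl⟩
    refine ⟨σ⁻¹, τ⁻¹, ?_, ?_⟩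
    · rw [QuotientGroup.mk_inv, QuotientGroup.mk_inv, map_inv, h]
    · rw [← map_inv]
      rfl

/-!
Let `D = C_i/M ⊕_φ H/N`, let `H` be the symmetry group of `f₀`, and choose `y : β → Bool` with
trivial stabilizer in `H` (mark one point in each regular block). Then `D` is the symmetry group of
the indicator of the set of vectors `x` on `Fin i ⊕ β` that either
* have exactly one `true` on `Fin i` and none on `β`, or
* are constantly `true` on `Fin i` and satisfy `f₀ = 0` on `β`, or
* lie in the `D`-orbit of `u ⊕ y` or of `p ⊕ y`, where `u` marks `{0}` and `p` marks `{0, 1}`.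

As `i ≥ 3`, counting the `true`s on `Fin i` shows that every symmetry `π` preserves each family.
The first family forces `π = σ ⊕ τ`, the second `τ ∈ H`. As `y` has trivial stabilizer,
preserving the two orbits means that `σ` permutes the vectors `u ∘ s` and `p ∘ s` (`s ∈ C_i`)
shifting their labels `s M` by `θ = φ⁻¹ (τ N)`. Comparing the two shows that `σ` commutes with the
rotation (otherwise the rotation would lie in `M`), so `σ ∈ C_i`, and then `σ M = θ`, i.e. `π ∈ D`.
-/

open Equiv Subgroup

section Fin2Indicator

variable {α : Type*}

noncomputable def fin2Indicator (S : Set (α → Bool)) : (α → Bool) → Fin 2 := S.indicator 1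

theorem mem_symmGroup_fin2Indicator (S : Set (α → Bool)) (σ : Perm α) :
    σ ∈ symmGroup (fin2Indicator S) ↔ ∀ x, x ∘ σ ∈ S ↔ x ∈ S := by
  refine forall_congr' fun x => ?_
  by_cases h : x ∈ S <;> by_cases h' : x ∘ σ ∈ S <;> simp [fin2Indicator, h, h']

theorem le_symmGroup_fin2Indicator {D : Subgroup (Perm α)} {S : Set (α → Bool)}
    (hD : ∀ σ ∈ D, ∀ x ∈ S, x ∘ σ ∈ S) : D ≤ symmGroup (fin2Indicator S) := by
  refine fun σ hσ => (mem_symmGroup_fin2Indicator S σ).mpr fun x => ⟨fun hx => ?_, hD σ hσ x⟩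
  simpa [Function.comp_assoc] using hD σ⁻¹ (inv_mem hσ) _ hx

end Fin2Indicator

section Weight

variable {α : Type*} [Fintype α]

def weight (v : α → Bool) : ℕ := Fintype.card {a // v a = true}

theorem weight_comp_perm (v : α → Bool) (σ : Perm α) : weight (v ∘ σ) = weight v :=
  Fintype.card_congr (σ.subtypeEquiv fun _ => Iff.rfl)

@[simp] theorem weight_true : weight (fun _ : α => true) = Fintype.card α := by
  simp [weight]

@[simp] theorem weight_false : weight (fun _ : α => false) = 0 := by
  simp [weight]

theorem weight_decide_eq [DecidableEq α] (z : α) : weight (fun a => decide (a = z)) = 1 := by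
  simp [weight]

theorem weight_decide_eq_or [DecidableEq α] {z w : α} (h : z ≠ w) :
    weight (fun a => decide (a = z ∨ a = w)) = 2 := by
  simp [weight, Fintype.card_subtype, Finset.filter_or, Finset.filter_eq', Finset.card_pair h]

end Weight

section Regular

variable {α : Type*}

theorem IsRegularPermGroup.eq_of_apply_eq {G : Subgroup (Perm α)} (hG : IsRegularPermGroup G)
    {g h : Perm α} (hg : g ∈ G) (hh : h ∈ G) {a : α} (hgh : g a = h a) : g = h := by
  have := hG.2 (h⁻¹ * g) (mul_mem (inv_mem hh) hg) a (by simp [Perm.mul_apply, hgh])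
  exact (inv_mul_eq_one.mp this).symm

theorem isRegularPermGroup_of_commute {G : Subgroup (Perm α)}
    (htrans : ∀ a b : α, ∃ σ ∈ G, σ a = b) (hcomm : ∀ g ∈ G, ∀ h ∈ G, Commute g h) :
    IsRegularPermGroup G := by
  refine ⟨htrans, fun g hg a hga => Equiv.ext fun b => ?_⟩
  obtain ⟨h, hh, rfl⟩ := htrans a b
  rw [Perm.one_apply, ← Perm.mul_apply, hcomm g hg h hh, Perm.mul_apply, hga]

theorem mem_of_forall_commute {G : Subgroup (Perm α)} (htrans : ∀ a b : α, ∃ σ ∈ G, σ a = b)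
    (hcomm : ∀ g ∈ G, ∀ h ∈ G, Commute g h) (z : α) {σ : Perm α} (hσ : ∀ g ∈ G, Commute σ g) :
    σ ∈ G := by
  obtain ⟨c, hc, hcz⟩ := htrans z (σ z)
  convert hc
  ext a
  obtain ⟨g, hg, rfl⟩ := htrans z a
  rw [← Perm.mul_apply, hσ g hg, Perm.mul_apply, ← hcz, ← Perm.mul_apply, hcomm g hg c hc,
    Perm.mul_apply]

theorem isRegularPermGroup_zpowers {f : Perm α} (hf : f.IsCycle) (hsupp : ∀ a, f a ≠ a) :
    IsRegularPermGroup (zpowers f) :=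
  isRegularPermGroup_of_commute
    (fun a b => by
      obtain ⟨k, hk⟩ := hf.exists_zpow_eq (hsupp a) (hsupp b)
      exact ⟨f ^ k, zpow_mem_zpowers f k, hk⟩)
    fun _ hg _ hh => setLike_mul_comm hg hh

theorem finRotate_apply_ne {n : ℕ} (hn : 2 ≤ n) (a : Fin n) : finRotate n a ≠ a :=
  Perm.mem_support.mp (by simp [support_finRotate_of_le hn])

theorem isRegularPermGroup_Cgroup {n : ℕ} (hn : 2 ≤ n) : IsRegularPermGroup (Cgroup n) :=
  isRegularPermGroup_zpowers (isCycle_finRotate_of_le hn) (finRotate_apply_ne hn)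

theorem Subgroup.eq_top_of_generator_mem {G : Type*} [Group G] {g : G}
    {M : Subgroup (zpowers g)} (h : ⟨g, mem_zpowers g⟩ ∈ M) : M = ⊤ := by
  rw [eq_top_iff']
  rintro ⟨x, hx⟩
  obtain ⟨k, rfl⟩ := mem_zpowers_iff.mp hx
  exact zpow_mem h k

end Regular

theorem IsDirectSumOfRegular.exists_trivial_stabilizer {β : Type*} {B : Subgroup (Perm β)}
    (hB : IsDirectSumOfRegular B) : ∃ y : β → Bool, ∀ π ∈ B, y ∘ π = y → π = 1 := by
  classical
  obtain ⟨ι, _, β', _, e, G, hreg, hB⟩ := hB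
  let mark : (Σ j, β' j) → Bool := fun x => decide (x.2 = Classical.choice ⟨x.2⟩)
  refine ⟨mark ∘ e, fun π hπ hy => Equiv.ext fun a => e.injective ?_⟩
  obtain ⟨g, hg, hπg⟩ := (hB π).mp hπ
  have hblock : ∀ a' j (v : β' j), e a' = ⟨j, v⟩ → e (π a') = ⟨j, g j v⟩ := fun a' j v h => by
    rw [hπg, h]
  rcases h : e a with ⟨j, w⟩
  have hgj : g j = 1 := by
    let p : β' j := Classical.choice ⟨w⟩
    have hfix : mark ⟨j, g j p⟩ = mark ⟨j, p⟩ := by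
      have := congrFun hy (e.symm ⟨j, p⟩)
      rwa [Function.comp_apply, Function.comp_apply, Function.comp_apply,
        hblock _ j p (e.apply_symm_apply _), e.apply_symm_apply] at this
    exact (hreg j).2 _ (hg j) p (by simpa [mark, p] using hfix)
  simp [hblock a j w h, hgj, h]

theorem eq_of_comp_eq_of_trivial_stabilizer {β : Type*} {H : Subgroup (Perm β)} {y : β → Bool}
    (hy : ∀ π ∈ H, y ∘ π = y → π = 1) {π π' : Perm β} (hπ : π ∈ H) (hπ' : π' ∈ H)
    (h : y ∘ π = y ∘ π') : π = π' := by
  refine mul_inv_eq_one.mp (hy _ (mul_mem hπ (inv_mem hπ')) (funext fun b => ?_))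
  simpa using congrFun h (π'⁻¹ b)

theorem ne_false_of_ne_top {α β : Type*} {G : Subgroup (Perm α)} {H : Subgroup (Perm β)}
    {M : Subgroup G} [M.Normal] {N : Subgroup H} [N.Normal] {y : β → Bool}
    (hy : ∀ π ∈ H, y ∘ π = y → π = 1) (φ : G ⧸ M ≃* H ⧸ N) (hM : M ≠ ⊤) :
    y ≠ fun _ => false := by
  rintro rfl
  have : Subsingleton H := ⟨fun r r' => Subtype.ext <|
    ((hy _ r.2 rfl).trans (hy _ r'.2 rfl).symm)⟩
  exact hM (QuotientGroup.subsingleton_iff.mp φ.toEquiv.subsingleton)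

section Twist

variable {α : Type*}

/-- `σ` permutes the vectors `u ∘ s`, `s ∈ G`, moving the one labelled `s M` to one labelled
`s M * θ`. -/
def TwistsOrbit (G : Subgroup (Perm α)) (M : Subgroup G) [M.Normal] (u : α → Bool)
    (σ : Perm α) (θ : G ⧸ M) : Prop :=
  ∀ s : G, ∃ s' : G, u ∘ ⇑(s : Perm α) ∘ ⇑σ = u ∘ ⇑(s' : Perm α) ∧ (s' : G ⧸ M) = s * θ

theorem TwistsOrbit.exists_eq [DecidableEq α] {G : Subgroup (Perm α)} {ρ : Perm α} (hρ : ρ ∈ G)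
    (hGρ : G ≤ zpowers ρ) (hreg : IsRegularPermGroup G) {M : Subgroup G} [M.Normal]
    (hρM : ⟨ρ, hρ⟩ ∉ M) (z : α) {σ : Perm α} {θ : G ⧸ M}
    (h1 : TwistsOrbit G M (fun a => decide (a = z)) σ θ)
    (h2 : TwistsOrbit G M (fun a => decide (a = z ∨ a = ρ z)) σ θ) :
    ∃ s₀ : G, (s₀ : Perm α) = σ ∧ (s₀ : G ⧸ M) = θ := by
  have hcomm : ∀ g ∈ G, ∀ h ∈ G, Commute g h := fun g hg h hh =>
    setLike_mul_comm (hGρ hg) (hGρ hh)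
  have hmoves : ∀ a, ρ a ≠ a := fun a ha => by
    have : (⟨ρ, hρ⟩ : G) = 1 := Subtype.ext (hreg.2 ρ hρ a ha)
    exact hρM (this ▸ one_mem M)
  have hσρ : ∀ a, σ (ρ a) = ρ (σ a) := by
    intro a
    obtain ⟨s, hs, hsa⟩ := hreg.1 (σ a) z
    obtain ⟨⟨s₁, hs₁⟩, hu, hθ₁⟩ := h1 ⟨s, hs⟩
    obtain ⟨⟨s₂, hs₂⟩, hp, hθ₂⟩ := h2 ⟨s, hs⟩
    have hu' : ∀ b, s (σ b) = z ↔ s₁ b = z := fun b => decide_eq_decide.mp (congrFun hu b)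
    have hp' : ∀ b, s (σ b) = z ∨ s (σ b) = ρ z ↔ s₂ b = z ∨ s₂ b = ρ z :=
      fun b => decide_eq_decide.mp (congrFun hp b)
    -- `s₂ a = ρ z` would put `s₁⁻¹ * s₂ = ρ` into `M`
    have hs₂a : s₂ a = z := by
      refine ((hp' a).mp (Or.inl hsa)).resolve_right fun h => hρM ?_
      have hM : ⟨s₁, hs₁⟩⁻¹ * ⟨s₂, hs₂⟩ ∈ M := QuotientGroup.eq.mp (hθ₁.trans hθ₂.symm)
      convert hM using 1
      apply Subtype.ext
      change ρ = s₁⁻¹ * s₂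
      refine hreg.eq_of_apply_eq hρ (mul_mem (inv_mem hs₁) hs₂) (a := a) ?_
      rw [Perm.mul_apply, h, ← (hu' a).mp hsa, ← Perm.mul_apply ρ, hcomm ρ hρ s₁ hs₁]
      simp
    have hs₂ρ : s₂ (ρ a) = ρ z := by
      rw [← hs₂a, ← Perm.mul_apply, hcomm s₂ hs₂ ρ hρ, Perm.mul_apply]
    rcases (hp' (ρ a)).mpr (Or.inr hs₂ρ) with h | h
    · exact absurd (σ.injective (s.injective (h.trans hsa.symm))) (hmoves a)
    · apply s.injective
      rw [h, ← hsa, ← Perm.mul_apply, hcomm ρ hρ s hs, Perm.mul_apply]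
  have hσ : σ ∈ G := mem_of_forall_commute hreg.1 hcomm z fun g hg => by
    obtain ⟨k, rfl⟩ := mem_zpowers_iff.mp (hGρ hg)
    exact Commute.zpow_right (Equiv.ext hσρ) k
  obtain ⟨s₁, hu, hθ⟩ := h1 1
  refine ⟨s₁, hreg.eq_of_apply_eq s₁.2 hσ (a := σ⁻¹ z) ?_, by simpa using hθ⟩
  simpa using (congrFun hu (σ⁻¹ z)).symm

end Twist

section TestSet

variable {α β : Type*} (G : Subgroup (Perm α)) (H : Subgroup (Perm β)) (M : Subgroup G) [M.Normal]
  (N : Subgroup H) [N.Normal] (φ : G ⧸ M ≃* H ⧸ N)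

@[simp] theorem comp_sumCongr_comp_inl (x : α ⊕ β → Bool) (σ : Perm α) (τ : Perm β) :
    (x ∘ sumCongr σ τ) ∘ Sum.inl = (x ∘ Sum.inl) ∘ σ := rfl

@[simp] theorem comp_sumCongr_comp_inr (x : α ⊕ β → Bool) (σ : Perm α) (τ : Perm β) :
    (x ∘ sumCongr σ τ) ∘ Sum.inr = (x ∘ Sum.inr) ∘ τ := rfl

def subdirectOrbit (u : α → Bool) (y : β → Bool) : Set (α ⊕ β → Bool) :=
  {x | ∃ (s : G) (r : H), φ (s : G ⧸ M) = r ∧ x = Sum.elim (u ∘ ⇑(s : Perm α)) (y ∘ ⇑(r : Perm β))}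

variable {G H M N φ}

theorem comp_sumCongr_mem_subdirectOrbit {u : α → Bool} {y : β → Bool} {x : α ⊕ β → Bool}
    (hx : x ∈ subdirectOrbit G H M N φ u y) {a : G} {b : H} (hab : φ (a : G ⧸ M) = b) :
    x ∘ sumCongr (a : Perm α) (b : Perm β) ∈ subdirectOrbit G H M N φ u y := by
  obtain ⟨s, r, hsr, rfl⟩ := hx
  refine ⟨s * a, r * b, by rw [QuotientGroup.mk_mul, QuotientGroup.mk_mul, map_mul, hsr, hab], ?_⟩
  ext (c | c) <;> rfl

theorem weight_inl_of_mem_subdirectOrbit [Fintype α] {u : α → Bool} {y : β → Bool}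
    {x : α ⊕ β → Bool} (hx : x ∈ subdirectOrbit G H M N φ u y) :
    weight (x ∘ Sum.inl) = weight u := by
  obtain ⟨s, r, -, rfl⟩ := hx
  exact weight_comp_perm u s

theorem inr_ne_false_of_mem_subdirectOrbit {u : α → Bool} {y : β → Bool} (hy : y ≠ fun _ => false)
    {x : α ⊕ β → Bool} (hx : x ∈ subdirectOrbit G H M N φ u y) :
    x ∘ Sum.inr ≠ fun _ => false := by
  obtain ⟨s, r, -, rfl⟩ := hx
  refine fun h => hy (funext fun b => ?_)
  simpa using congrFun h ((r : Perm β)⁻¹ b)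

theorem twistsOrbit_of_forall_comp_sumCongr_mem {u : α → Bool} {y : β → Bool}
    (hy : ∀ π ∈ H, y ∘ π = y → π = 1) {σ : Perm α} (τ : H)
    (h : ∀ x ∈ subdirectOrbit G H M N φ u y,
      x ∘ sumCongr σ τ ∈ subdirectOrbit G H M N φ u y) :
    TwistsOrbit G M u σ (φ.symm τ) := by
  intro s
  obtain ⟨r, hr⟩ := QuotientGroup.mk_surjective (φ s)
  obtain ⟨s', r', hsr', hx⟩ := h _ ⟨s, r, hr.symm, rfl⟩
  have hrτ : r * τ = r' :=
    Subtype.ext (eq_of_comp_eq_of_trivial_stabilizer hy (r * τ).2 r'.2 (congrArg (· ∘ Sum.inr) hx))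
  refine ⟨s', congrArg (· ∘ Sum.inl) hx, φ.injective ?_⟩
  rw [hsr', ← hrτ, map_mul, φ.apply_symm_apply, QuotientGroup.mk_mul, hr]

variable (G H M N φ)

def subdirectTestSet [Fintype α] (f₀ : (β → Bool) → Fin 2) (u p : α → Bool) (y : β → Bool) :
    Set (α ⊕ β → Bool) :=
  {x | (weight (x ∘ Sum.inl) = 1 ∧ x ∘ Sum.inr = fun _ => false) ∨
    (x ∘ Sum.inl = (fun _ => true) ∧ f₀ (x ∘ Sum.inr) = 0) ∨
    x ∈ subdirectOrbit G H M N φ u y ∨ x ∈ subdirectOrbit G H M N φ p y}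

variable {G H M N φ} [Fintype α] {f₀ : (β → Bool) → Fin 2} {u p : α → Bool} {y : β → Bool}

theorem subdirectTestSet_comm :
    subdirectTestSet G H M N φ f₀ u p y = subdirectTestSet G H M N φ f₀ p u y :=
  Set.ext fun _ => or_congr_right (or_congr_right or_comm)

theorem subdirectSum_le_symmGroup_subdirectTestSet (hH : H ≤ symmGroup f₀) :
    subdirectSum G H M N φ ≤ symmGroup (fin2Indicator (subdirectTestSet G H M N φ f₀ u p y)) := by
  refine le_symmGroup_fin2Indicator ?_
  rintro _ ⟨a, b, hab, rfl⟩ x (⟨hw, hr⟩ | ⟨hl, hf⟩ | hx | hx)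
  · exact Or.inl ⟨by simpa [weight_comp_perm] using hw, by simp [hr]⟩
  · exact Or.inr (Or.inl ⟨by simp [hl], by simpa [hH b.2 _] using hf⟩)
  · exact Or.inr (Or.inr (Or.inl (comp_sumCongr_mem_subdirectOrbit hx hab)))
  · exact Or.inr (Or.inr (Or.inr (comp_sumCongr_mem_subdirectOrbit hx hab)))

end TestSet

section TestSetConverse

variable {α β : Type*} {G : Subgroup (Perm α)} {H : Subgroup (Perm β)} {M : Subgroup G} [M.Normal]
  {N : Subgroup H} [N.Normal] {φ : G ⧸ M ≃* H ⧸ N} [Fintype α] {f₀ : (β → Bool) → Fin 2}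
  {u p : α → Bool} {y : β → Bool}

theorem weight_inl_ne_zero_of_mem_subdirectTestSet (hu : weight u = 1) (hp : weight p = 2)
    (hα : 3 ≤ Fintype.card α) {x : α ⊕ β → Bool} (hx : x ∈ subdirectTestSet G H M N φ f₀ u p y) :
    weight (x ∘ Sum.inl) ≠ 0 := by
  rcases hx with ⟨hw, -⟩ | ⟨hl, -⟩ | hx | hx
  · omega
  · rw [hl, weight_true]; omega
  · rw [weight_inl_of_mem_subdirectOrbit hx]; omega
  · rw [weight_inl_of_mem_subdirectOrbit hx]; omega

theorem mapsTo_inl_of_mem_symmGroup_subdirectTestSet (hu : weight u = 1) (hp : weight p = 2)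
    (hα : 3 ≤ Fintype.card α) {π : Perm (α ⊕ β)}
    (hπ : π ∈ symmGroup (fin2Indicator (subdirectTestSet G H M N φ f₀ u p y))) :
    Set.MapsTo π (Set.range Sum.inl) (Set.range Sum.inl) := by
  classical
  rintro _ ⟨a, rfl⟩
  let x : α ⊕ β → Bool := fun c => decide (c = Sum.inl a)
  have hx : x ∈ subdirectTestSet G H M N φ f₀ u p y :=
    Or.inl ⟨by simpa [x, Function.comp_def] using weight_decide_eq a, by funext; simp [x]⟩
  -- `x ∘ π⁻¹` is the indicator of `π (inl a)`
  have hx' := ((mem_symmGroup_fin2Indicator _ _).mp (inv_mem hπ) x).mpr hx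
  rcases h : π (Sum.inl a) with a' | b
  · exact ⟨a', rfl⟩
  · refine absurd ?_ (weight_inl_ne_zero_of_mem_subdirectTestSet hu hp hα hx')
    have : (x ∘ ⇑π⁻¹) ∘ Sum.inl = fun _ => false := by
      funext c
      simp [x, Equiv.symm_apply_eq, h]
    rw [this, weight_false]

theorem mem_subdirectTestSet_iff_of_inl_eq_true (hu : weight u = 1) (hp : weight p = 2)
    (hα : 3 ≤ Fintype.card α) {x : α ⊕ β → Bool} (hx : x ∘ Sum.inl = fun _ => true) :
    x ∈ subdirectTestSet G H M N φ f₀ u p y ↔ f₀ (x ∘ Sum.inr) = 0 := by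
  refine ⟨?_, fun hf => Or.inr (Or.inl ⟨hx, hf⟩)⟩
  rintro (⟨hw, -⟩ | ⟨-, hf⟩ | ho | ho)
  · rw [hx, weight_true] at hw; omega
  · exact hf
  · have := weight_inl_of_mem_subdirectOrbit ho; rw [hx, weight_true] at this; omega
  · have := weight_inl_of_mem_subdirectOrbit ho; rw [hx, weight_true] at this; omega

theorem mem_symmGroup_of_sumCongr_mem (hu : weight u = 1) (hp : weight p = 2)
    (hα : 3 ≤ Fintype.card α) {σ : Perm α} {τ : Perm β}
    (hπ : sumCongr σ τ ∈ symmGroup (fin2Indicator (subdirectTestSet G H M N φ f₀ u p y))) :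
    τ ∈ symmGroup f₀ := by
  intro z
  have h := (mem_symmGroup_fin2Indicator _ _).mp hπ (Sum.elim (fun _ => true) z)
  rw [mem_subdirectTestSet_iff_of_inl_eq_true hu hp hα rfl,
    mem_subdirectTestSet_iff_of_inl_eq_true hu hp hα rfl] at h
  have hFin2 : ∀ v w : Fin 2, (v = 0 ↔ w = 0) → v = w := by decide
  exact hFin2 _ _ h

theorem mem_subdirectOrbit_of_mem_subdirectTestSet {x : α ⊕ β → Bool}
    (hx : x ∈ subdirectTestSet G H M N φ f₀ u p y) (hl : x ∘ Sum.inl ≠ fun _ => true)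
    (hr : x ∘ Sum.inr ≠ fun _ => false) :
    x ∈ subdirectOrbit G H M N φ u y ∨ x ∈ subdirectOrbit G H M N φ p y := by
  rcases hx with ⟨-, h⟩ | ⟨h, -⟩ | h | h
  exacts [absurd h hr, absurd h hl, Or.inl h, Or.inr h]

theorem comp_sumCongr_mem_subdirectOrbit_of_mem_symmGroup (hup : weight u ≠ weight p)
    (hu : weight u ≠ Fintype.card α) (hy : y ≠ fun _ => false) {σ : Perm α} {τ : Perm β}
    (hπ : sumCongr σ τ ∈ symmGroup (fin2Indicator (subdirectTestSet G H M N φ f₀ u p y)))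
    {x : α ⊕ β → Bool} (hx : x ∈ subdirectOrbit G H M N φ u y) :
    x ∘ sumCongr σ τ ∈ subdirectOrbit G H M N φ u y := by
  have hx' := ((mem_symmGroup_fin2Indicator _ _).mp hπ x).mpr (Or.inr (Or.inr (Or.inl hx)))
  have hw : weight ((x ∘ sumCongr σ τ) ∘ Sum.inl) = weight u := by
    rw [comp_sumCongr_comp_inl, weight_comp_perm, weight_inl_of_mem_subdirectOrbit hx]
  refine (mem_subdirectOrbit_of_mem_subdirectTestSet hx' (fun h => hu ?_) fun h => ?_).resolve_right
    fun h => hup ?_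
  · rw [← hw, h, weight_true]
  · refine inr_ne_false_of_mem_subdirectOrbit hy hx (funext fun b => ?_)
    simpa using congrFun h (τ⁻¹ b)
  · rw [← hw, weight_inl_of_mem_subdirectOrbit h]

end TestSetConverse

theorem representable_subdirectSum_of_twistsOrbit {α β : Type*} [Fintype α] [Finite β]
    {G : Subgroup (Perm α)} {H : Subgroup (Perm β)} {M : Subgroup G} [M.Normal]
    {N : Subgroup H} [N.Normal] (φ : G ⧸ M ≃* H ⧸ N) (hM : M ≠ ⊤)
    {f₀ : (β → Bool) → Fin 2} (hf₀ : H = symmGroup f₀) {y : β → Bool}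
    (hy : ∀ π ∈ H, y ∘ π = y → π = 1) {u p : α → Bool} (hu : weight u = 1) (hp : weight p = 2)
    (hα : 3 ≤ Fintype.card α)
    (hσ : ∀ σ θ, TwistsOrbit G M u σ θ → TwistsOrbit G M p σ θ →
      ∃ s₀ : G, (s₀ : Perm α) = σ ∧ (s₀ : G ⧸ M) = θ) :
    Representable 2 (subdirectSum G H M N φ) := by
  have hy₀ := ne_false_of_ne_top hy φ hM
  refine ⟨_, le_antisymm
    (subdirectSum_le_symmGroup_subdirectTestSet (u := u) (p := p) (y := y) hf₀.le) fun π hπ => ?_⟩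
  obtain ⟨⟨σ, τ⟩, rfl⟩ := Perm.mem_sumCongrHom_range_of_perm_mapsTo_inl
    (mapsTo_inl_of_mem_symmGroup_subdirectTestSet hu hp hα hπ)
  have hτ : τ ∈ H := hf₀ ▸ mem_symmGroup_of_sumCongr_mem hu hp hα hπ
  have hu' : TwistsOrbit G M u σ (φ.symm (⟨τ, hτ⟩ : H)) :=
    twistsOrbit_of_forall_comp_sumCongr_mem hy ⟨τ, hτ⟩ fun _ =>
      comp_sumCongr_mem_subdirectOrbit_of_mem_symmGroup (by omega) (by omega) hy₀ hπ
  rw [subdirectTestSet_comm] at hπ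
  have hp' : TwistsOrbit G M p σ (φ.symm (⟨τ, hτ⟩ : H)) :=
    twistsOrbit_of_forall_comp_sumCongr_mem hy ⟨τ, hτ⟩ fun _ =>
      comp_sumCongr_mem_subdirectOrbit_of_mem_symmGroup (by omega) (by omega) hy₀ hπ
  obtain ⟨s₀, rfl, hθ⟩ := hσ σ _ hu' hp'
  exact ⟨s₀, ⟨τ, hτ⟩, by rw [hθ, φ.apply_symm_apply], rfl⟩

theorem subdirectSum_cyclic_representable
    (i : ℕ) (hi : i ∈ ({3, 4, 5} : Set ℕ)) {β : Type*} [Fintype β]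
    (H : Subgroup (Equiv.Perm β))
    (B : Subgroup (Equiv.Perm β)) (hHB : H ≤ B) (hB : IsDirectSumOfRegular B)
    (M : Subgroup (Cgroup i)) [M.Normal] (N : Subgroup H) [N.Normal]
    (φ : ↥(Cgroup i) ⧸ M ≃* ↥H ⧸ N) (hM : M ≠ ⊤)
    (hH : Representable 2 H) :
    Representable 2 (subdirectSum (Cgroup i) H M N φ) := by
  obtain ⟨f₀, hf₀⟩ := hH
  obtain ⟨y, hy⟩ := hB.exists_trivial_stabilizer
  have hi3 : 3 ≤ i := by rcases hi with rfl | rfl | rfl <;> norm_num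
  have hreg : IsRegularPermGroup (Cgroup i) := isRegularPermGroup_Cgroup (by omega)
  let z : Fin i := ⟨0, by omega⟩
  exact representable_subdirectSum_of_twistsOrbit φ hM hf₀ (fun π hπ => hy π (hHB hπ))
    (weight_decide_eq z) (weight_decide_eq_or (finRotate_apply_ne (by omega) z).symm)
    (by simpa using hi3)
    fun σ θ h1 h2 => TwistsOrbit.exists_eq (G := Cgroup i) (mem_zpowers _) le_rfl hreg
      (fun h => hM (eq_top_of_generator_mem h)) z h1 h2
end

section
/- The group K_4, a subgroup of Equiv.Perm (Fin 4), is 3-representable but not 2-representable. -/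
/-! The three weight-two K₄-orbits of `Fin 4 → Bool` consist of the indicators of the blocks of
the three perfect matchings of `Fin 4`, and K₄ is exactly the group of permutations fixing each
matching. A function with three values can separate these orbits and has symmetry group K₄. A
two-valued K₄-invariant function must agree on two of them; the transposition that fixes the third
matching and exchanges these two then preserves the function, but it is odd and K₄ is even. -/

open Equiv

def kleinA : Perm (Fin 4) := swap 0 1 * swap 2 3

def kleinB : Perm (Fin 4) := swap 0 2 * swap 1 3

def kleinElems : Finset (Perm (Fin 4)) := {1, kleinA, kleinB, kleinA * kleinB}

lemma mem_K4_of_mem_kleinElems {g : Perm (Fin 4)} (hg : g ∈ kleinElems) : g ∈ K4 := by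
  have ha : kleinA ∈ K4 := Subgroup.subset_closure (Set.mem_insert _ _)
  have hb : kleinB ∈ K4 := Subgroup.subset_closure (Set.mem_insert_of_mem _ rfl)
  simp only [kleinElems, Finset.mem_insert, Finset.mem_singleton] at hg
  rcases hg with rfl | rfl | rfl | rfl
  exacts [one_mem _, ha, hb, mul_mem ha hb]

lemma K4_le_iff {H : Subgroup (Perm (Fin 4))} : K4 ≤ H ↔ kleinA ∈ H ∧ kleinB ∈ H := by
  simp [K4, Subgroup.closure_le, Set.insert_subset_iff, kleinA, kleinB]

lemma K4_le_alternatingGroup : K4 ≤ alternatingGroup (Fin 4) :=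
  K4_le_iff.2 ⟨Perm.mem_alternatingGroup.2 (by decide), Perm.mem_alternatingGroup.2 (by decide)⟩

lemma swap_notMem_K4 {i j : Fin 4} (hij : i ≠ j) : swap i j ∉ K4 := fun h => by
  have hsign := Perm.mem_alternatingGroup.1 (K4_le_alternatingGroup h)
  rw [Perm.sign_swap hij] at hsign
  exact absurd hsign (by decide)

lemma mem_symmGroup {α V : Type*} {f : (α → Bool) → V} {σ : Perm α} :
    σ ∈ symmGroup f ↔ ∀ x : α → Bool, f (x ∘ σ) = f x := Iff.rfl

def MergesOrbits {α : Type*} (S : Finset (Perm α)) (σ : Perm α) (u v : α → Bool) : Prop :=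
  ∀ x : α → Bool, (∃ g ∈ S, x ∘ σ = x ∘ g) ∨
    ∃ g ∈ S, ∃ h ∈ S, (x = u ∘ g ∧ x ∘ σ = v ∘ h) ∨ (x = v ∘ g ∧ x ∘ σ = u ∘ h)

lemma mem_symmGroup_of_mergesOrbits {α V : Type*} {f : (α → Bool) → V} {S : Finset (Perm α)}
    (hS : ∀ g ∈ S, g ∈ symmGroup f) {u v : α → Bool} (huv : f u = f v) {σ : Perm α}
    (hσ : MergesOrbits S σ u v) : σ ∈ symmGroup f := by
  intro x
  rcases hσ x with ⟨g, hg, hx⟩ | ⟨g, hg, h, hh, ⟨rfl, hx⟩ | ⟨rfl, hx⟩⟩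
  · rw [hx, hS g hg]
  · rw [hx, hS h hh, hS g hg, huv]
  · rw [hx, hS h hh, hS g hg, huv]

/-- A block of the `i`-th perfect matching `{0, i + 1} | {0, i + 1}ᶜ` of `Fin 4`. -/
def matchingBlock (i : Fin 3) : Fin 4 → Bool := fun a => decide (a = 0 ∨ a = i.succ)

lemma exists_swap_mergesOrbits (i j : Fin 3) (hij : i ≠ j) :
    ∃ k : Fin 4, k ≠ 0 ∧
      MergesOrbits kleinElems (swap 0 k) (matchingBlock i) (matchingBlock j) := by
  revert i j
  unfold MergesOrbits
  decide

def matchingClass (x : Fin 4 → Bool) : Fin 3 :=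
  if x = matchingBlock 1 ∨ (! x ·) = matchingBlock 1 then 1
  else if x = matchingBlock 2 ∨ (! x ·) = matchingBlock 2 then 2 else 0

lemma symmGroup_matchingClass : symmGroup matchingClass = K4 := by
  refine le_antisymm (fun σ hσ => mem_K4_of_mem_kleinElems ?_) ?_
  · revert σ
    simp only [mem_symmGroup]
    decide
  · exact K4_le_iff.2 ⟨mem_symmGroup.2 (by decide), mem_symmGroup.2 (by decide)⟩

theorem K4_three_representable_not_two_representable :
    Representable 3 K4 ∧ ¬ Representable 2 K4 := by
  refine ⟨⟨matchingClass, symmGroup_matchingClass.symm⟩, ?_⟩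
  rintro ⟨f, hf⟩
  obtain ⟨i, j, hij, hfij⟩ :=
    Fintype.exists_ne_map_eq_of_card_lt (fun i => f (matchingBlock i)) (by simp)
  obtain ⟨k, hk, hmerge⟩ := exists_swap_mergesOrbits i j hij
  have hK : ∀ g ∈ kleinElems, g ∈ symmGroup f := fun g hg => hf ▸ mem_K4_of_mem_kleinElems hg
  exact swap_notMem_K4 hk.symm (hf ▸ mem_symmGroup_of_mergesOrbits hK hfij hmerge)
end

section
/- Let β be a finite type with n elements and let H ≤ Equiv.Perm β satisfy H = G(h) for some 4-valued boolean function h on β such that h y = 0 for every y : β → Bool having exactly n − 1 true coordinates. Then the direct sum of the trivial group on a one-point type with H, i.e. the subgroup of Equiv.Perm (Unit ⊕ β) of all permutations Equiv.sumCongr 1 τ with τ ∈ H, is 2-representable. -/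
/-!
Encode the two bits of `h y ∈ Fin 4` in one boolean function on `Unit ⊕ β`: the extra coordinate
selects which bit is read off `y`, except that with the extra coordinate off the all-true `y` gets
the value `1`. A permutation moving the extra point to some `b ∈ β` would identify the input that
is false only at `b` (value `0`, because `h` vanishes on inputs with exactly `n - 1` true
coordinates) with the input that is false only at the extra point (value `1`). So every symmetry
fixes the extra point, and on `β` it must preserve both bits of `h`, i.e. lie in `G(h)`.
-/

open Finset

theorem symmGroup_comp_of_injective {α V W : Type*} (f : (α → Bool) → V) {e : V → W}
    (he : Function.Injective e) : symmGroup (e ∘ f) = symmGroup f := by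
  ext σ
  exact forall_congr' fun x => he.eq_iff

theorem mem_directSum_bot_iff {α β : Type*} (H : Subgroup (Equiv.Perm β))
    (π : Equiv.Perm (α ⊕ β)) :
    π ∈ directSum (⊥ : Subgroup (Equiv.Perm α)) H ↔ ∃ τ ∈ H, Equiv.sumCongr 1 τ = π := by
  simp only [directSum, Subgroup.mem_map, Subgroup.mem_prod, Subgroup.mem_bot, Prod.exists,
    Equiv.Perm.sumCongrHom_apply]
  constructor
  · rintro ⟨σ, τ, ⟨rfl, hτ⟩, rfl⟩
    exact ⟨τ, hτ, rfl⟩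
  · rintro ⟨τ, hτ, rfl⟩
    exact ⟨1, τ, ⟨rfl, hτ⟩, rfl⟩

theorem exists_sumCongr_one_eq_of_apply_inl {β : Type*} [Finite β]
    {π : Equiv.Perm (Unit ⊕ β)} (hπ : π (Sum.inl ()) = Sum.inl ()) :
    ∃ τ : Equiv.Perm β, Equiv.sumCongr 1 τ = π := by
  have hmaps : Set.MapsTo π (Set.range Sum.inl) (Set.range Sum.inl) := by
    rintro _ ⟨⟨⟩, rfl⟩
    exact ⟨(), hπ.symm⟩
  obtain ⟨⟨σ, τ⟩, hστ⟩ := Equiv.Perm.mem_sumCongrHom_range_of_perm_mapsTo_inl hmaps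
  exact ⟨τ, by rw [← hστ, Subsingleton.elim σ 1]; rfl⟩

section PointExtension

variable {β V : Type*} [Fintype β]

def pointExtension (g : (β → Bool) → V × V) (c : V) (x : Unit ⊕ β → Bool) : V :=
  if x (Sum.inl ()) then (g (x ∘ Sum.inr)).1
  else if ∀ b, x (Sum.inr b) then c else (g (x ∘ Sum.inr)).2

variable (g : (β → Bool) → V × V) (c : V)

theorem pointExtension_elim_true (y : β → Bool) :
    pointExtension g c (Sum.elim (fun _ => true) y) = (g y).1 := by
  simp only [pointExtension, Sum.elim_inl, if_true]
  rfl

theorem pointExtension_elim_false {y : β → Bool} (hy : ∃ b, y b = false) :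
    pointExtension g c (Sum.elim (fun _ => false) y) = (g y).2 := by
  obtain ⟨b, hb⟩ := hy
  have hnot : ¬ ∀ b, y b = true := fun h => by simp [h b] at hb
  simp only [pointExtension, Sum.elim_inl, Sum.elim_inr, Bool.false_eq_true, if_false, hnot]
  rfl

theorem sumCongr_mem_symmGroup_pointExtension_iff (τ : Equiv.Perm β) :
    Equiv.sumCongr 1 τ ∈ symmGroup (pointExtension g c) ↔ τ ∈ symmGroup g := by
  constructor
  · intro hτ y
    by_cases hy : ∀ b, y b = true
    · rw [show y = fun _ => true from funext hy]
      rfl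
    simp only [not_forall, Bool.not_eq_true] at hy
    have hyτ : ∃ b, (y ∘ τ) b = false := by
      obtain ⟨b, hb⟩ := hy
      exact ⟨τ.symm b, by simpa using hb⟩
    have hcomp : ∀ v : Bool, Sum.elim (fun _ => v) y ∘ Equiv.sumCongr (1 : Equiv.Perm Unit) τ =
        Sum.elim (fun _ => v) (y ∘ τ) := fun v => by
      funext s
      cases s <;> rfl
    have h1 := hτ (Sum.elim (fun _ => true) y)
    have h2 := hτ (Sum.elim (fun _ => false) y)
    rw [hcomp, pointExtension_elim_true, pointExtension_elim_true] at h1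
    rw [hcomp, pointExtension_elim_false _ _ hyτ, pointExtension_elim_false _ _ (by simpa using hy)]
      at h2
    exact Prod.ext h1 h2
  · intro hτ x
    have hinr : (x ∘ Equiv.sumCongr (1 : Equiv.Perm Unit) τ) ∘ Sum.inr = (x ∘ Sum.inr) ∘ τ := rfl
    simp only [pointExtension, hinr, hτ (x ∘ Sum.inr), Function.comp_apply, Equiv.sumCongr_apply,
      Sum.map_inl, Sum.map_inr, Equiv.Perm.coe_one, id_eq,
      τ.forall_congr_right (q := fun b => x (Sum.inr b) = true)]

theorem apply_inl_of_mem_symmGroup_pointExtension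
    (hc : ∀ y : β → Bool, #{b | y b = true} = Fintype.card β - 1 → (g y).1 ≠ c)
    {π : Equiv.Perm (Unit ⊕ β)} (hπ : π ∈ symmGroup (pointExtension g c)) :
    π (Sum.inl ()) = Sum.inl () := by
  classical
  rcases hb : π (Sum.inl ()) with ⟨⟩ | b
  · rfl
  exfalso
  let x : Unit ⊕ β → Bool := fun s => decide (s ≠ Sum.inr b)
  have hcard : #{d | (x ∘ Sum.inr) d = true} = Fintype.card β - 1 := by
    simp only [x, Function.comp_apply, ne_eq, Sum.inr.injEq, decide_not, Bool.not_eq_eq_eq_not,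
      Bool.not_true, decide_eq_false_iff_not, filter_ne', mem_univ, card_erase_of_mem, card_univ]
  have hx : pointExtension g c x = (g (x ∘ Sum.inr)).1 := by
    simp [pointExtension, x]
  have hxπ : pointExtension g c (x ∘ π) = c := by
    have hne : ∀ d, π (Sum.inr d) ≠ Sum.inr b := fun d hd =>
      Sum.inr_ne_inl (π.injective (hd.trans hb.symm))
    simp [pointExtension, x, hb, hne]
  exact hc _ hcard (hx.symm.trans ((hπ x).symm.trans hxπ))

theorem symmGroup_pointExtension
    (hc : ∀ y : β → Bool, #{b | y b = true} = Fintype.card β - 1 → (g y).1 ≠ c) :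
    symmGroup (pointExtension g c) = directSum (⊥ : Subgroup (Equiv.Perm Unit)) (symmGroup g) := by
  ext π
  rw [mem_directSum_bot_iff]
  constructor
  · intro hπ
    obtain ⟨τ, rfl⟩ :=
      exists_sumCongr_one_eq_of_apply_inl (apply_inl_of_mem_symmGroup_pointExtension g c hc hπ)
    exact ⟨τ, (sumCongr_mem_symmGroup_pointExtension_iff g c τ).1 hπ, rfl⟩
  · rintro ⟨τ, hτ, rfl⟩
    exact (sumCongr_mem_symmGroup_pointExtension_iff g c τ).2 hτ

end PointExtension

theorem trivial_directSum_representable_of_four_valued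
    {β : Type*} [Fintype β] (H : Subgroup (Equiv.Perm β))
    (h : (β → Bool) → Fin 4) (hHh : H = symmGroup h)
    (h0 : ∀ y : β → Bool,
      (Finset.univ.filter fun b => y b = true).card = Fintype.card β - 1 → h y = 0) :
    Representable 2 (directSum (⊥ : Subgroup (Equiv.Perm Unit)) H) := by
  let bits : Fin 4 ≃ Fin 2 × Fin 2 := (finProdFinEquiv (m := 2) (n := 2)).symm
  refine ⟨pointExtension (bits ∘ h) 1, ?_⟩
  have hc : ∀ y : β → Bool, #{b | y b = true} = Fintype.card β - 1 → (bits (h y)).1 ≠ 1 :=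
    fun y hy => by rw [h0 y hy]; decide
  rw [symmGroup_pointExtension (bits ∘ h) 1 hc, symmGroup_comp_of_injective _ bits.injective, hHh]
end
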